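/- arXiv:1609.00896 — 5 statements merged into one kernel-verified Lean document; each statement's English description precedes it below -/
import Mathlib

section
/- For any two tones (v,f) and (v',f') with v,v' complex and f,f' real, and any T>0, the quantity dist((v,f),(v',f'))^2 := (1/T)∫_0^T |v e^{2πift} - v' e^{2πif't}|^2 dt satisfies dist((v,f),(v',f'))^2 ≍ (|v|^2+|v'|^2)·min(1, T^2|f-f'|^2) + |v-v'|^2, i.e., each side is bounded by a universal constant times the other. -/
/-
Multiplying the integrand by the unimodular factor `e^{-2πif't}` and rescaling time to `[0, 1]`,
the tone distance becomes the mean of `‖v e^{ixs} - v'‖²` over `s ∈ [0, 1]`, where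
`x = 2π(f - f')T`. Expanding the square, it equals `‖v‖² + ‖v'‖² - 2 Re(v v̄' g)` with `g` the
mean of `e^{ixs}`, which can be rewritten as `‖v‖²(1 - ‖g‖²) + ‖v g - v'‖²`, or symmetrically in
`v, v'`. Both bounds then follow from `1 - ‖g‖² ≍ min(1, x²)` and `‖1 - g‖² ≲ min(1, x²)`.
Since `‖g‖ = |sin u| / |u|` with `u = x / 2`, the first of these is the elementary estimate
`u - |sin u| ≍ min(u, u³)` for `u ≥ 0`.
-/

open MeasureTheory Real

noncomputable def toneDistSq (v v' : ℂ) (f f' T : ℝ) : ℝ :=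
  (1 / T) * ∫ t in (0:ℝ)..T,
    ‖v * Complex.exp (2 * π * f * t * Complex.I)
      - v' * Complex.exp (2 * π * f' * t * Complex.I)‖ ^ 2

open ComplexConjugate

lemma sub_abs_sin_le_cube_div_six {u : ℝ} (hu : 0 ≤ u) : u - |sin u| ≤ u ^ 3 / 6 := by
  linarith [le_abs_self (sin u), sin_ge_sub_cube hu]

lemma min_div_le_sub_abs_sin {u : ℝ} (hu : 0 ≤ u) : min u (u ^ 3) / 14 ≤ u - |sin u| := by
  have taylor {y : ℝ} (hy0 : 0 ≤ y) (hy1 : y ≤ 1) : sin y ≤ y - y ^ 3 / 6 + y ^ 5 / 100 := by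
    have := (abs_le.1 (sin_bound (abs_le.2 ⟨by linarith, hy1⟩))).2
    rwa [abs_of_nonneg hy0, sub_le_iff_le_add'] at this
  rcases le_total u 1 with h1 | h1
  · have hsin : 0 ≤ sin u := sin_nonneg_of_nonneg_of_le_pi hu (by linarith [pi_gt_three])
    have h5 : u ^ 5 ≤ u ^ 3 := pow_le_pow_of_le_one hu h1 (by norm_num)
    rw [abs_of_nonneg hsin]
    linarith [min_le_right u (u ^ 3), taylor hu h1, pow_nonneg hu 3]
  rcases le_total u 2 with h2 | h2
  · have hsin : 0 ≤ sin u := sin_nonneg_of_nonneg_of_le_pi hu (by linarith [pi_gt_three])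
    have hlip := (abs_le.1 (abs_sin_sub_sin_le u 1)).2
    rw [abs_of_nonneg (by linarith : 0 ≤ u - 1)] at hlip
    rw [abs_of_nonneg hsin]
    linarith [min_le_left u (u ^ 3), taylor zero_le_one le_rfl]
  · linarith [min_le_left u (u ^ 3), abs_sin_le_one u]

lemma sq_norm_add_le {E : Type*} [SeminormedAddGroup E] (a b : E) :
    ‖a + b‖ ^ 2 ≤ 2 * (‖a‖ ^ 2 + ‖b‖ ^ 2) :=
  (pow_le_pow_left₀ (norm_nonneg _) (norm_add_le a b) 2).trans add_sq_le

lemma min_one_mul_le {a : ℝ} (ha : 1 ≤ a) (y : ℝ) : min 1 (a * y) ≤ a * min 1 y := by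
  rcases le_total y 1 with hy | hy
  · rw [min_eq_right hy]; exact min_le_right _ _
  · rw [min_eq_left hy, mul_one]; exact (min_le_left _ _).trans ha

/-- For unimodular `e` with mean `g` (such as `e = exp (i x s)`, `s` uniform on `[0, 1]`), the
mean of `‖v * e - v'‖ ^ 2`. -/
noncomputable def meanDistSq (g v v' : ℂ) : ℝ := ‖v‖ ^ 2 + ‖v'‖ ^ 2 - 2 * (v * conj v' * g).re

section meanDistSq

variable (g v v' : ℂ)

lemma meanDistSq_eq_left :
    meanDistSq g v v' = ‖v‖ ^ 2 * (1 - ‖g‖ ^ 2) + ‖v * g - v'‖ ^ 2 := by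
  simp only [meanDistSq, Complex.sq_norm, Complex.normSq_apply, Complex.mul_re, Complex.mul_im,
    Complex.sub_re, Complex.sub_im, Complex.conj_re, Complex.conj_im]
  ring

lemma meanDistSq_eq_right :
    meanDistSq g v v' = ‖v'‖ ^ 2 * (1 - ‖g‖ ^ 2) + ‖v - v' * conj g‖ ^ 2 := by
  simp only [meanDistSq, Complex.sq_norm, Complex.normSq_apply, Complex.mul_re, Complex.mul_im,
    Complex.sub_re, Complex.sub_im, Complex.conj_re, Complex.conj_im]
  ring

variable {g} {m : ℝ}

lemma meanDistSq_of_norm_eq_one (hg : ‖g‖ = 1) : meanDistSq g v v' = ‖v * g - v'‖ ^ 2 := by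
  simp [meanDistSq_eq_left, hg]

lemma le_meanDistSq (hlow : m ≤ 56 * (1 - ‖g‖ ^ 2)) (hdiff : ‖1 - g‖ ^ 2 ≤ 4 * m) :
    (‖v‖ ^ 2 + ‖v'‖ ^ 2) * m + ‖v - v'‖ ^ 2 ≤ 562 * meanDistSq g v v' := by
  have hv : ‖v - v'‖ ^ 2 ≤ 2 * (‖v * g - v'‖ ^ 2 + ‖v‖ ^ 2 * ‖1 - g‖ ^ 2) := by
    have h := sq_norm_add_le (v * g - v') (v * (1 - g))
    rwa [show v * g - v' + v * (1 - g) = v - v' by ring, norm_mul, mul_pow] at h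
  nlinarith [meanDistSq_eq_left g v v', meanDistSq_eq_right g v v', sq_nonneg ‖v‖,
    sq_nonneg ‖v'‖, sq_nonneg ‖v * g - v'‖, sq_nonneg ‖v - v' * conj g‖,
    mul_le_mul_of_nonneg_left hlow (sq_nonneg ‖v‖),
    mul_le_mul_of_nonneg_left hlow (sq_nonneg ‖v'‖),
    mul_le_mul_of_nonneg_left hdiff (sq_nonneg ‖v‖)]

lemma meanDistSq_le (hup : 1 - ‖g‖ ^ 2 ≤ m) (hdiff : ‖1 - g‖ ^ 2 ≤ 4 * m) :
    meanDistSq g v v' ≤ 9 * ((‖v‖ ^ 2 + ‖v'‖ ^ 2) * m + ‖v - v'‖ ^ 2) := by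
  have hv : ‖v * g - v'‖ ^ 2 ≤ 2 * (‖v - v'‖ ^ 2 + ‖v‖ ^ 2 * ‖1 - g‖ ^ 2) := by
    have h := sq_norm_add_le (v - v') (v * (g - 1))
    rwa [show v - v' + v * (g - 1) = v * g - v' by ring, norm_mul, mul_pow, norm_sub_rev g] at h
  nlinarith [meanDistSq_eq_left g v v', sq_nonneg ‖v‖, sq_nonneg ‖v'‖, sq_nonneg ‖v - v'‖,
    mul_le_mul_of_nonneg_left hup (sq_nonneg ‖v‖),
    mul_le_mul_of_nonneg_left hdiff (sq_nonneg ‖v‖)]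

end meanDistSq

noncomputable def phaseMean (x : ℝ) : ℂ := ∫ s in (0:ℝ)..1, Complex.exp (x * s * Complex.I)

lemma phaseMean_zero : phaseMean 0 = 1 := by simp [phaseMean]

lemma phaseMean_of_ne_zero {x : ℝ} (hx : x ≠ 0) :
    phaseMean x = (Complex.exp (x * Complex.I) - 1) / (x * Complex.I) := by
  have hxI : (x : ℂ) * Complex.I ≠ 0 := by simp [hx]
  simp_rw [phaseMean, mul_right_comm (x : ℂ) _ Complex.I]
  simp [integral_exp_mul_complex hxI]

lemma norm_phaseMean_of_ne_zero {x : ℝ} (hx : x ≠ 0) :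
    ‖phaseMean x‖ = |sin (x / 2)| / |x / 2| := by
  rw [phaseMean_of_ne_zero hx, norm_div, mul_comm _ Complex.I,
    Complex.norm_exp_I_mul_ofReal_sub_one]
  simp [abs_div]
  ring

lemma norm_phaseMean_le_one (x : ℝ) : ‖phaseMean x‖ ≤ 1 := by
  simpa [phaseMean] using
    intervalIntegral.norm_integral_le_of_norm_le_const (a := 0) (b := 1) (C := 1)
      (f := fun s : ℝ => Complex.exp (x * s * Complex.I))
      fun s _ => by rw [← Complex.ofReal_mul, Complex.norm_exp_ofReal_mul_I]

lemma norm_one_sub_phaseMean_le (x : ℝ) : ‖1 - phaseMean x‖ ≤ |x| := by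
  have h : 1 - phaseMean x = ∫ s in (0:ℝ)..1, (1 - Complex.exp (x * s * Complex.I)) := by
    rw [intervalIntegral.integral_sub intervalIntegrable_const
      (Continuous.intervalIntegrable (by fun_prop) _ _)]
    simp [phaseMean]
  rw [h]
  simpa using intervalIntegral.norm_integral_le_of_norm_le_const (a := 0) (b := 1) (C := |x|)
    (f := fun s : ℝ => 1 - Complex.exp (x * s * Complex.I)) fun s hs => by
      rw [Set.uIoc_of_le zero_le_one] at hs
      calc ‖1 - Complex.exp (x * s * Complex.I)‖
          = ‖Complex.exp (Complex.I * (x * s : ℝ)) - 1‖ := by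
            rw [norm_sub_rev]; push_cast; ring_nf
        _ ≤ ‖x * s‖ := norm_exp_I_mul_ofReal_sub_one_le
        _ ≤ |x| := by
            rw [Real.norm_eq_abs, abs_mul, abs_of_pos hs.1]
            exact mul_le_of_le_one_right (abs_nonneg x) hs.2

lemma one_sub_norm_phaseMean_of_ne_zero {x : ℝ} (hx : x ≠ 0) :
    1 - ‖phaseMean x‖ = (|x / 2| - |sin (|x / 2|)|) / |x / 2| := by
  have hsin : |sin (|x / 2|)| = |sin (x / 2)| := by
    rcases abs_choice (x / 2) with h | h <;> simp [h, sin_neg]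
  rw [hsin, norm_phaseMean_of_ne_zero hx, sub_div, div_self (by positivity)]

lemma one_sub_norm_phaseMean_le (x : ℝ) : 1 - ‖phaseMean x‖ ≤ x ^ 2 / 24 := by
  rcases eq_or_ne x 0 with rfl | hx
  · simp [phaseMean_zero]
  have hu : 0 < |x / 2| := by positivity
  rw [one_sub_norm_phaseMean_of_ne_zero hx, div_le_iff₀ hu]
  calc |x / 2| - |sin (|x / 2|)| ≤ |x / 2| ^ 3 / 6 := sub_abs_sin_le_cube_div_six hu.le
    _ = x ^ 2 / 24 * |x / 2| := by rw [pow_succ, sq_abs]; ring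

lemma min_le_one_sub_norm_phaseMean (x : ℝ) : min 1 (x ^ 2) ≤ 56 * (1 - ‖phaseMean x‖) := by
  rcases eq_or_ne x 0 with rfl | hx
  · simp [phaseMean_zero]
  have hu : 0 < |x / 2| := by positivity
  have hmin : min 1 (x ^ 2) * |x / 2| ≤ 4 * min |x / 2| (|x / 2| ^ 3) := by
    rw [min_mul_of_nonneg _ _ hu.le, mul_min_of_nonneg _ _ (by norm_num : (0:ℝ) ≤ 4)]
    refine min_le_min (by linarith) (le_of_eq ?_)
    rw [pow_succ |x / 2|, sq_abs]; ring
  rw [one_sub_norm_phaseMean_of_ne_zero hx, mul_div_assoc', le_div_iff₀ hu]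
  linarith [min_div_le_sub_abs_sin hu.le]

lemma one_sub_sq_norm_phaseMean_le (x : ℝ) : 1 - ‖phaseMean x‖ ^ 2 ≤ min 1 (x ^ 2) := by
  have h0 := norm_nonneg (phaseMean x)
  have h1 := norm_phaseMean_le_one x
  refine le_min (by nlinarith) ?_
  nlinarith [one_sub_norm_phaseMean_le x, sq_nonneg x]

lemma min_le_one_sub_sq_norm_phaseMean (x : ℝ) :
    min 1 (x ^ 2) ≤ 56 * (1 - ‖phaseMean x‖ ^ 2) := by
  have h0 := norm_nonneg (phaseMean x)
  have h1 := norm_phaseMean_le_one x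
  nlinarith [min_le_one_sub_norm_phaseMean x]

lemma sq_norm_one_sub_phaseMean_le (x : ℝ) : ‖1 - phaseMean x‖ ^ 2 ≤ 4 * min 1 (x ^ 2) := by
  have h2 : ‖1 - phaseMean x‖ ≤ 2 := by
    linarith [norm_sub_le (1 : ℂ) (phaseMean x), norm_phaseMean_le_one x, norm_one (α := ℂ)]
  rw [mul_min_of_nonneg _ _ (by norm_num : (0:ℝ) ≤ 4)]
  refine le_min (by nlinarith [norm_nonneg (1 - phaseMean x)]) ?_
  nlinarith [norm_one_sub_phaseMean_le x, norm_nonneg (1 - phaseMean x), sq_abs x, abs_nonneg x]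

lemma norm_mul_exp_sub_mul_exp (v v' : ℂ) (a b : ℝ) :
    ‖v * Complex.exp (a * Complex.I) - v' * Complex.exp (b * Complex.I)‖
      = ‖v * Complex.exp ((a - b : ℝ) * Complex.I) - v'‖ := by
  have h : v * Complex.exp (a * Complex.I) - v' * Complex.exp (b * Complex.I)
      = (v * Complex.exp ((a - b : ℝ) * Complex.I) - v') * Complex.exp (b * Complex.I) := by
    rw [sub_mul, mul_assoc, ← Complex.exp_add]
    push_cast
    ring_nf
  rw [h, norm_mul, Complex.norm_exp_ofReal_mul_I, mul_one]

lemma integral_sq_norm_mul_exp_sub (x : ℝ) (v v' : ℂ) :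
    ∫ s in (0:ℝ)..1, ‖v * Complex.exp (x * s * Complex.I) - v'‖ ^ 2
      = meanDistSq (phaseMean x) v v' := by
  have he : Continuous fun s : ℝ => v * conj v' * Complex.exp (x * s * Complex.I) := by fun_prop
  have hpt (s : ℝ) : ‖v * Complex.exp (x * s * Complex.I) - v'‖ ^ 2
      = ‖v‖ ^ 2 + ‖v'‖ ^ 2 - 2 * (v * conj v' * Complex.exp (x * s * Complex.I)).re :=
    (meanDistSq_of_norm_eq_one v v' (by
      rw [← Complex.ofReal_mul, Complex.norm_exp_ofReal_mul_I])).symm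
  simp_rw [hpt]
  rw [intervalIntegral.integral_sub intervalIntegrable_const
      (Continuous.intervalIntegrable (by fun_prop) _ _),
    intervalIntegral.integral_const_mul]
  have hre := Complex.reCLM.intervalIntegral_comp_comm (he.intervalIntegrable (μ := volume) 0 1)
  simp only [Complex.reCLM_apply] at hre
  rw [hre, intervalIntegral.integral_const_mul]
  simp [meanDistSq, phaseMean]

lemma toneDistSq_eq_meanDistSq (v v' : ℂ) (f f' : ℝ) {T : ℝ} (hT : T ≠ 0) :
    toneDistSq v v' f f' T = meanDistSq (phaseMean (2 * π * (f - f') * T)) v v' := by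
  have hint := intervalIntegral.integral_comp_mul_left
    (fun t : ℝ => ‖v * Complex.exp ((2 * π * (f - f') * t : ℝ) * Complex.I) - v'‖ ^ 2)
    (a := 0) (b := 1) hT
  simp only [mul_zero, mul_one, smul_eq_mul] at hint
  rw [← integral_sq_norm_mul_exp_sub]
  calc toneDistSq v v' f f' T
      = T⁻¹ * ∫ t in (0:ℝ)..T,
          ‖v * Complex.exp ((2 * π * (f - f') * t : ℝ) * Complex.I) - v'‖ ^ 2 := by
        rw [toneDistSq, one_div]
        congr 2 with t
        have h := norm_mul_exp_sub_mul_exp v v' (2 * π * f * t) (2 * π * f' * t)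
        push_cast at h ⊢
        rw [h]
        ring_nf
    _ = _ := by
        rw [← hint]
        congr 1 with s
        push_cast
        ring_nf

/-- the tone distance squared is equivalent, up to universal constants,
to `(|v|² + |v'|²) · min(1, T²|f-f'|²) + |v - v'|²`. -/
theorem tone_dist_sq_equiv :
    ∃ c C : ℝ, 0 < c ∧ 0 < C ∧
      ∀ (v v' : ℂ) (f f' T : ℝ), 0 < T →
        c * ((‖v‖ ^ 2 + ‖v'‖ ^ 2) * min 1 (T ^ 2 * |f - f'| ^ 2) + ‖v - v'‖ ^ 2)
            ≤ toneDistSq v v' f f' T ∧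
        toneDistSq v v' f f' T
            ≤ C * ((‖v‖ ^ 2 + ‖v'‖ ^ 2) * min 1 (T ^ 2 * |f - f'| ^ 2) + ‖v - v'‖ ^ 2) := by
  refine ⟨1 / 562, 360, by norm_num, by norm_num, fun v v' f f' T hT => ?_⟩
  set x := 2 * π * (f - f') * T
  set m := min 1 (T ^ 2 * |f - f'| ^ 2)
  have hx : x ^ 2 = 4 * π ^ 2 * (T ^ 2 * |f - f'| ^ 2) := by rw [sq_abs]; ring
  have hπ : 1 ≤ 4 * π ^ 2 ∧ 4 * π ^ 2 ≤ 40 := by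
    constructor <;> nlinarith [pi_gt_three, pi_lt_d2]
  have hm : m ≤ min 1 (x ^ 2) := by
    rw [hx]; exact min_le_min_left 1 (le_mul_of_one_le_left (by positivity) hπ.1)
  have hm' : min 1 (x ^ 2) ≤ 40 * m := by
    rw [hx]
    exact (min_one_mul_le hπ.1 _).trans (mul_le_mul_of_nonneg_right hπ.2 (by positivity))
  have hlow := le_meanDistSq v v' (min_le_one_sub_sq_norm_phaseMean x)
    (sq_norm_one_sub_phaseMean_le x)
  have hup := meanDistSq_le v v' (one_sub_sq_norm_phaseMean_le x)
    (sq_norm_one_sub_phaseMean_le x)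
  have hS : 0 ≤ ‖v‖ ^ 2 + ‖v'‖ ^ 2 := by positivity
  rw [toneDistSq_eq_meanDistSq v v' f f' hT.ne']
  constructor
  · nlinarith [mul_le_mul_of_nonneg_left hm hS]
  · nlinarith [mul_le_mul_of_nonneg_left hm' hS]
end

section
/- Upper bound half of the tone distance lemma: for v,v' ∈ ℂ, f,f' ∈ ℝ, T>0, (1/T)∫_0^T |v e^{2πift} - v' e^{2πif't}|^2 dt ≤ 2|v|^2·min(4, (4π²/3)T²(f-f')²) + 2|v-v'|². -/
open MeasureTheory Real

/-!
Write `v e^{ia} - v' e^{ib} = v (e^{ia} - e^{ib}) + (v - v') e^{ib}` and use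
`‖x + y‖² ≤ 2‖x‖² + 2‖y‖²` together with `|e^{ia} - e^{ib}|² ≤ min 4 (a - b)²`.
With `a - b = 2π(f - f')t`, averaging the pointwise bound over `[0, T]` gives the claim, since
the mean of `min 4 (k t)²` is at most the minimum of the means `4` and `k² T² / 3`.
-/

open Complex in
theorem norm_exp_mul_I_sub_exp_mul_I_sq_le (a b : ℝ) :
    ‖exp (a * I) - exp (b * I)‖ ^ 2 ≤ min 4 ((a - b) ^ 2) := by
  have h_two : ‖exp (a * I) - exp (b * I)‖ ≤ 2 :=
    (norm_sub_le _ _).trans (by simp only [norm_exp_ofReal_mul_I]; norm_num)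
  have h_dist : ‖exp (a * I) - exp (b * I)‖ ≤ |a - b| :=
    calc ‖exp (a * I) - exp (b * I)‖ = ‖exp (I * (a - b : ℝ)) - 1‖ := by
          rw [← one_mul ‖exp (I * _) - 1‖, ← norm_exp_ofReal_mul_I b, ← norm_mul, mul_sub,
            ← Complex.exp_add, mul_one]
          push_cast; ring_nf
      _ ≤ |a - b| := Real.norm_exp_I_mul_ofReal_sub_one_le
  refine le_min ?_ ?_
  · nlinarith [norm_nonneg (exp (a * I) - exp (b * I))]
  · rw [← sq_abs (a - b)]
    exact pow_le_pow_left₀ (norm_nonneg _) h_dist 2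

open Complex in
theorem norm_mul_exp_sub_mul_exp_sq_le (v v' : ℂ) (a b : ℝ) :
    ‖v * exp (a * I) - v' * exp (b * I)‖ ^ 2
      ≤ 2 * ‖v‖ ^ 2 * min 4 ((a - b) ^ 2) + 2 * ‖v - v'‖ ^ 2 := by
  calc ‖v * exp (a * I) - v' * exp (b * I)‖ ^ 2
        = ‖v * (exp (a * I) - exp (b * I)) + (v - v') * exp (b * I)‖ ^ 2 := by ring_nf
    _ ≤ (‖v‖ * ‖exp (a * I) - exp (b * I)‖ + ‖v - v'‖) ^ 2 := by
        gcongr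
        refine (norm_add_le _ _).trans_eq ?_
        rw [norm_mul, norm_mul, norm_exp_ofReal_mul_I, mul_one]
    _ ≤ 2 * ((‖v‖ * ‖exp (a * I) - exp (b * I)‖) ^ 2 + ‖v - v'‖ ^ 2) := add_sq_le
    _ ≤ 2 * ‖v‖ ^ 2 * min 4 ((a - b) ^ 2) + 2 * ‖v - v'‖ ^ 2 := by
        rw [mul_pow]
        have := norm_exp_mul_I_sub_exp_mul_I_sq_le a b
        have : ‖v‖ ^ 2 * ‖exp (a * I) - exp (b * I)‖ ^ 2 ≤ ‖v‖ ^ 2 * min 4 ((a - b) ^ 2) := by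
          gcongr
        linarith

theorem integral_min_sq_le (c k T : ℝ) (hT : 0 ≤ T) :
    ∫ t in (0:ℝ)..T, min c ((k * t) ^ 2) ≤ T * min c (k ^ 2 * T ^ 2 / 3) := by
  have h_int : IntervalIntegrable (fun t => min c ((k * t) ^ 2)) volume 0 T :=
    (by fun_prop : Continuous fun t : ℝ => min c ((k * t) ^ 2)).intervalIntegrable _ _
  rw [mul_min_of_nonneg _ _ hT]
  refine le_min ?_ ?_
  · calc ∫ t in (0:ℝ)..T, min c ((k * t) ^ 2) ≤ ∫ _ in (0:ℝ)..T, c :=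
          intervalIntegral.integral_mono_on hT h_int intervalIntegrable_const
            fun t _ => min_le_left _ _
      _ = T * c := by simp
  · calc ∫ t in (0:ℝ)..T, min c ((k * t) ^ 2) ≤ ∫ t in (0:ℝ)..T, (k * t) ^ 2 :=
          intervalIntegral.integral_mono_on hT h_int
            ((by fun_prop : Continuous fun t : ℝ => (k * t) ^ 2).intervalIntegrable _ _)
            fun t _ => min_le_right _ _
      _ = T * (k ^ 2 * T ^ 2 / 3) := by
          simp only [mul_pow, intervalIntegral.integral_const_mul, integral_pow]
          ring

/-- upper bound half of the tone distance lemma. -/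
theorem tone_dist_sq_upper (v v' : ℂ) (f f' T : ℝ) (hT : 0 < T) :
    (1 / T) * ∫ t in (0:ℝ)..T,
        ‖v * Complex.exp (2 * π * f * t * Complex.I)
          - v' * Complex.exp (2 * π * f' * t * Complex.I)‖ ^ 2
      ≤ 2 * ‖v‖ ^ 2 * min 4 ((4 * π ^ 2 / 3) * T ^ 2 * (f - f') ^ 2)
          + 2 * ‖v - v'‖ ^ 2 := by
  set k := 2 * π * (f - f')
  have h_pt (t : ℝ) : ‖v * Complex.exp (2 * π * f * t * Complex.I)
          - v' * Complex.exp (2 * π * f' * t * Complex.I)‖ ^ 2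
        ≤ 2 * ‖v‖ ^ 2 * min 4 ((k * t) ^ 2) + 2 * ‖v - v'‖ ^ 2 := by
    have := norm_mul_exp_sub_mul_exp_sq_le v v' (2 * π * f * t) (2 * π * f' * t)
    push_cast at this
    convert this using 4
    ring
  have h_k : k ^ 2 * T ^ 2 / 3 = (4 * π ^ 2 / 3) * T ^ 2 * (f - f') ^ 2 := by ring
  calc (1 / T) * ∫ t in (0:ℝ)..T, ‖v * Complex.exp (2 * π * f * t * Complex.I)
          - v' * Complex.exp (2 * π * f' * t * Complex.I)‖ ^ 2
        ≤ (1 / T) * ∫ t in (0:ℝ)..T, 2 * ‖v‖ ^ 2 * min 4 ((k * t) ^ 2) + 2 * ‖v - v'‖ ^ 2 := by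
        gcongr
        refine intervalIntegral.integral_mono_on hT.le ?_ ?_ fun t _ => h_pt t
        · exact Continuous.intervalIntegrable (by fun_prop) _ _
        · exact Continuous.intervalIntegrable (by fun_prop) _ _
    _ = (1 / T) * (2 * ‖v‖ ^ 2 * ∫ t in (0:ℝ)..T, min 4 ((k * t) ^ 2))
          + 2 * ‖v - v'‖ ^ 2 := by
        rw [intervalIntegral.integral_add, intervalIntegral.integral_const_mul,
          intervalIntegral.integral_const]
        · field_simp; ring
        · exact Continuous.intervalIntegrable (by fun_prop) _ _
        · exact intervalIntegrable_const
    _ ≤ (1 / T) * (2 * ‖v‖ ^ 2 * (T * min 4 (k ^ 2 * T ^ 2 / 3))) + 2 * ‖v - v'‖ ^ 2 := by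
        gcongr
        exact integral_min_sq_le 4 k T hT.le
    _ = _ := by rw [h_k]; field_simp
end

section
/- Obtuse-angle inequality for scaled complex numbers: let v, v' ∈ ℂ with |v'| ≥ |v| > 0 and set v* = (|v|/|v'|)·v'. Then for all real angles θ, θ': |v e^{iθ} - v' e^{iθ'}|² ≥ |v e^{iθ} - v* e^{iθ'}|² + |v* - v'|². -/
/-- The angle of the triangle `a, r • b, b` at `r • b` is non-acute, so Pythagoras holds as an
inequality. -/
theorem norm_sub_smul_sq_add_norm_smul_sub_sq_le {E : Type*} [NormedAddCommGroup E]
    [InnerProductSpace ℝ E] {a b : E} {r : ℝ} (hr : r ≤ 1) (hab : ‖a‖ ≤ r * ‖b‖) :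
    ‖a - r • b‖ ^ 2 + ‖r • b - b‖ ^ 2 ≤ ‖a - b‖ ^ 2 := by
  have hinner : inner ℝ a b ≤ r * ‖b‖ ^ 2 :=
    calc inner ℝ a b ≤ ‖a‖ * ‖b‖ := real_inner_le_norm a b
      _ ≤ r * ‖b‖ * ‖b‖ := by gcongr
      _ = r * ‖b‖ ^ 2 := by ring
  have hobtuse : 0 ≤ inner ℝ (a - r • b) (r • b - b) := by
    have : inner ℝ (a - r • b) (r • b - b) = (1 - r) * (r * ‖b‖ ^ 2 - inner ℝ a b) := by
      simp only [inner_sub_left, inner_sub_right, real_inner_smul_left, real_inner_smul_right,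
        real_inner_self_eq_norm_sq, norm_smul, Real.norm_eq_abs, mul_pow, sq_abs]
      ring
    rw [this]
    exact mul_nonneg (sub_nonneg.2 hr) (sub_nonneg.2 hinner)
  calc ‖a - r • b‖ ^ 2 + ‖r • b - b‖ ^ 2
      ≤ ‖a - r • b‖ ^ 2 + 2 * inner ℝ (a - r • b) (r • b - b) + ‖r • b - b‖ ^ 2 := by linarith
    _ = ‖a - b‖ ^ 2 := by rw [← norm_add_sq_real, sub_add_sub_cancel]

theorem obtuse_angle_ineq_general (v v' : ℂ) (hvv' : ‖v‖ ≤ ‖v'‖)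
    (θ θ' : ℝ) :
    ‖v * Complex.exp (θ * Complex.I) - ((‖v‖ / ‖v'‖ : ℝ) : ℂ) * v' * Complex.exp (θ' * Complex.I)‖ ^ 2
        + ‖((‖v‖ / ‖v'‖ : ℝ) : ℂ) * v' - v'‖ ^ 2
      ≤ ‖v * Complex.exp (θ * Complex.I) - v' * Complex.exp (θ' * Complex.I)‖ ^ 2 := by
  set r : ℝ := ‖v‖ / ‖v'‖
  have hr : r ≤ 1 := div_le_one_of_le₀ hvv' (norm_nonneg _)
  have hv : ‖v‖ = r * ‖v'‖ :=
    (div_mul_cancel_of_imp fun h ↦ le_antisymm (h ▸ hvv') (norm_nonneg v)).symm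
  have hrot : ‖(r : ℂ) * v' - v'‖ = ‖(r : ℂ) * v' * Complex.exp (θ' * Complex.I)
      - v' * Complex.exp (θ' * Complex.I)‖ := by
    rw [← sub_mul, norm_mul, Complex.norm_exp_ofReal_mul_I, mul_one]
  have hpyth := norm_sub_smul_sq_add_norm_smul_sub_sq_le (a := v * Complex.exp (θ * Complex.I))
    (b := v' * Complex.exp (θ' * Complex.I)) hr (by
      rw [norm_mul, norm_mul, Complex.norm_exp_ofReal_mul_I, Complex.norm_exp_ofReal_mul_I,
        mul_one, mul_one, hv])
  rwa [hrot, mul_assoc, ← Complex.real_smul]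

/-- obtuse-angle inequality. For `|v'| ≥ |v| > 0` and
`v* = (|v|/|v'|)·v'`, for all real `θ, θ'`:
`|v e^{iθ} - v' e^{iθ'}|² ≥ |v e^{iθ} - v* e^{iθ'}|² + |v* - v'|²`. -/
theorem obtuse_angle_ineq (v v' : ℂ) (hv : 0 < ‖v‖) (hvv' : ‖v‖ ≤ ‖v'‖)
    (θ θ' : ℝ) :
    ‖v * Complex.exp (θ * Complex.I) - ((‖v‖ / ‖v'‖ : ℝ) : ℂ) * v' * Complex.exp (θ' * Complex.I)‖ ^ 2
        + ‖((‖v‖ / ‖v'‖ : ℝ) : ℂ) * v' - v'‖ ^ 2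
      ≤ ‖v * Complex.exp (θ * Complex.I) - v' * Complex.exp (θ' * Complex.I)‖ ^ 2 :=
  obtuse_angle_ineq_general v v' hvv' θ θ'
end

section
/- Full integral bound: for real frequencies f_i ≠ f_j with |f_i − f_j| ≥ 2/T and T > 0, ∫_{−∞}^{∞} min(T, 1/|f_i − θ|) · min(T, 1/|f_j − θ|) dθ ≤ C · log(T|f_i − f_j|)/|f_i − f_j| for some universal constant C. -/
/-!
Write `Δ = |f_i - f_j|`. For every `θ` one of `f_i, f_j` lies at distance at least `Δ/2` from `θ`,
so its factor is at most `min(2/Δ, 1/dist)` for the distance to the other point; hence the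
integrand is bounded by `F(f_i - θ) + F(f_j - θ)` with `F x = min(T, 1/|x|) · min(2/Δ, 1/|x|)`.
Splitting `(0, ∞)` at `1/T` and `Δ/2`, the even function `F` integrates to at most
`2/Δ + (2/Δ) log(TΔ/2) + 2/Δ` over each half-line.
-/

open MeasureTheory Real Set

/-- Since `1 / |0| = 0`, `truncInv T 0 = 0` rather than `T`. -/
noncomputable def truncInv (T x : ℝ) : ℝ := min T (1 / |x|)

variable {S T x y : ℝ}

lemma truncInv_nonneg (hT : 0 ≤ T) (x : ℝ) : 0 ≤ truncInv T x :=
  le_min hT (by positivity)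

lemma truncInv_le_left (T x : ℝ) : truncInv T x ≤ T := min_le_left _ _

lemma truncInv_le_inv (T x : ℝ) : truncInv T x ≤ 1 / |x| := min_le_right _ _

lemma truncInv_abs (T x : ℝ) : truncInv T |x| = truncInv T x := by
  simp only [truncInv, abs_abs]

lemma measurable_truncInv (T : ℝ) : Measurable (truncInv T) :=
  measurable_const.min (measurable_const.div measurable_abs)

lemma truncInv_mul_le_of_abs_le (hS : 0 < S) (hT : 0 ≤ T) (hxy : |x| ≤ |y|) (hy : S⁻¹ ≤ |y|) :
    truncInv T x * truncInv T y ≤ truncInv T x * truncInv S x := by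
  rcases eq_or_ne x 0 with rfl | hx
  · simp [truncInv, hT]
  refine mul_le_mul_of_nonneg_left (le_min ?_ ?_) (truncInv_nonneg hT x)
  · calc truncInv T y ≤ |y|⁻¹ := (truncInv_le_inv T y).trans_eq (one_div _)
      _ ≤ S := inv_le_of_inv_le₀ hS hy
  · exact (truncInv_le_inv T y).trans (one_div_le_one_div_of_le (abs_pos.2 hx) hxy)

lemma truncInv_mul_truncInv_le (hS : 0 < S) (hT : 0 ≤ T) (hxy : 2 * S⁻¹ ≤ |x| + |y|) :
    truncInv T x * truncInv T y ≤
      truncInv T x * truncInv S x + truncInv T y * truncInv S y := by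
  have hF (z : ℝ) := mul_nonneg (truncInv_nonneg hT z) (truncInv_nonneg hS.le z)
  rcases le_total |x| |y| with h | h
  · exact (truncInv_mul_le_of_abs_le hS hT h (by linarith)).trans
      (le_add_of_nonneg_right (hF y))
  · rw [mul_comm]
    exact (truncInv_mul_le_of_abs_le hS hT h (by linarith)).trans
      (le_add_of_nonneg_left (hF x))

lemma integrable_truncInv_mul_truncInv (hS : 0 ≤ S) (hT : 0 ≤ T) :
    Integrable fun x ↦ truncInv T x * truncInv S x := by
  refine (integrable_inv_one_add_sq.const_mul (T * S + 1)).mono'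
    ((measurable_truncInv T).mul (measurable_truncInv S)).aestronglyMeasurable
    (ae_of_all _ fun x ↦ ?_)
  have hF := mul_nonneg (truncInv_nonneg hT x) (truncInv_nonneg hS x)
  have hbound : truncInv T x * truncInv S x ≤ T * S :=
    mul_le_mul (truncInv_le_left T x) (truncInv_le_left S x) (truncInv_nonneg hS x) hT
  have hdecay : truncInv T x * truncInv S x * x ^ 2 ≤ 1 := by
    rcases eq_or_ne x 0 with rfl | hx
    · simp
    calc truncInv T x * truncInv S x * x ^ 2 ≤ 1 / |x| * (1 / |x|) * x ^ 2 := by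
          gcongr
          · exact truncInv_nonneg hS x
          · exact truncInv_le_inv T x
          · exact truncInv_le_inv S x
      _ = 1 := by rw [← sq_abs x]; field_simp
  rw [Real.norm_eq_abs, abs_of_nonneg hF, ← div_eq_mul_inv, le_div_iff₀ (by positivity)]
  nlinarith

lemma setIntegral_Ioc_zero_truncInv_mul_le (hS : 0 < S) (hST : S ≤ T) :
    ∫ x in Ioc 0 T⁻¹, truncInv T x * truncInv S x ≤ S := by
  have hT : 0 < T := hS.trans_le hST
  calc ∫ x in Ioc 0 T⁻¹, truncInv T x * truncInv S x ≤ ∫ _ in Ioc 0 T⁻¹, T * S :=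
        setIntegral_mono_on (integrable_truncInv_mul_truncInv hS.le hT.le).integrableOn
          (integrableOn_const measure_Ioc_lt_top.ne) measurableSet_Ioc fun x _ ↦
          mul_le_mul (truncInv_le_left T x) (truncInv_le_left S x) (truncInv_nonneg hS.le x) hT.le
    _ = S := by
        rw [setIntegral_const, measureReal_def, Real.volume_Ioc, sub_zero,
          ENNReal.toReal_ofReal (by positivity), smul_eq_mul]
        field_simp

lemma setIntegral_Ioc_inv_truncInv_mul_le (hS : 0 < S) (hST : S ≤ T) :
    ∫ x in Ioc T⁻¹ S⁻¹, truncInv T x * truncInv S x ≤ S * log (T / S) := by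
  have hT : 0 < T := hS.trans_le hST
  have hab : T⁻¹ ≤ S⁻¹ := inv_anti₀ hS hST
  calc ∫ x in Ioc T⁻¹ S⁻¹, truncInv T x * truncInv S x ≤ ∫ x in Ioc T⁻¹ S⁻¹, S * x⁻¹ := by
        refine setIntegral_mono_on (integrable_truncInv_mul_truncInv hS.le hT.le).integrableOn
          ?_ measurableSet_Ioc fun x hx ↦ ?_
        · refine (ContinuousOn.integrableOn_Icc ?_).mono_set Ioc_subset_Icc_self
          exact continuousOn_const.mul (continuousOn_inv₀.mono fun x hx ↦
            ((inv_pos.2 hT).trans_le hx.1).ne')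
        · have hx0 : 0 < x := (inv_pos.2 hT).trans hx.1
          calc truncInv T x * truncInv S x ≤ 1 / |x| * S :=
                mul_le_mul (truncInv_le_inv T x) (truncInv_le_left S x)
                  (truncInv_nonneg hS.le x) (by positivity)
            _ = S * x⁻¹ := by rw [abs_of_pos hx0, one_div, mul_comm]
    _ = S * log (T / S) := by
        rw [integral_const_mul, ← intervalIntegral.integral_of_le hab,
          integral_inv_of_pos (inv_pos.2 hT) (inv_pos.2 hS), inv_div_inv]

lemma setIntegral_Ioi_inv_truncInv_mul_le (hS : 0 < S) (hST : S ≤ T) :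
    ∫ x in Ioi S⁻¹, truncInv T x * truncInv S x ≤ S := by
  have hT : 0 < T := hS.trans_le hST
  have hb : 0 < S⁻¹ := inv_pos.2 hS
  calc ∫ x in Ioi S⁻¹, truncInv T x * truncInv S x ≤ ∫ x in Ioi S⁻¹, x ^ (-2 : ℝ) := by
        refine setIntegral_mono_on (integrable_truncInv_mul_truncInv hS.le hT.le).integrableOn
          (integrableOn_Ioi_rpow_of_lt (by norm_num) hb) measurableSet_Ioi fun x hx ↦ ?_
        have hx0 : 0 < x := hb.trans hx
        calc truncInv T x * truncInv S x ≤ 1 / |x| * (1 / |x|) :=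
              mul_le_mul (truncInv_le_inv T x) (truncInv_le_inv S x)
                (truncInv_nonneg hS.le x) (by positivity)
          _ = x ^ (-2 : ℝ) := by
              rw [abs_of_pos hx0, rpow_neg hx0.le, rpow_two]; field_simp
    _ = S := by
        rw [integral_Ioi_rpow_of_lt (by norm_num) hb]
        norm_num [rpow_neg_one]

lemma setIntegral_Ioi_zero_truncInv_mul_le (hS : 0 < S) (hST : S ≤ T) :
    ∫ x in Ioi 0, truncInv T x * truncInv S x ≤ S * (2 + log (T / S)) := by
  have hT : 0 < T := hS.trans_le hST
  have hint := integrable_truncInv_mul_truncInv hS.le hT.le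
  have hab : T⁻¹ ≤ S⁻¹ := inv_anti₀ hS hST
  rw [← Ioc_union_Ioi_eq_Ioi (inv_pos.2 hT).le, setIntegral_union Ioc_disjoint_Ioi_same
      measurableSet_Ioi hint.integrableOn hint.integrableOn,
    ← Ioc_union_Ioi_eq_Ioi hab, setIntegral_union Ioc_disjoint_Ioi_same
      measurableSet_Ioi hint.integrableOn hint.integrableOn]
  linarith [setIntegral_Ioc_zero_truncInv_mul_le hS hST,
    setIntegral_Ioc_inv_truncInv_mul_le hS hST, setIntegral_Ioi_inv_truncInv_mul_le hS hST]

lemma integral_truncInv_mul_truncInv_le (hS : 0 < S) (hST : S ≤ T) :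
    ∫ x, truncInv T x * truncInv S x ≤ 2 * S * (2 + log (T / S)) := by
  have h := integral_comp_abs (f := fun x ↦ truncInv T x * truncInv S x)
  simp only [truncInv_abs] at h
  rw [h, mul_assoc]
  gcongr
  exact setIntegral_Ioi_zero_truncInv_mul_le hS hST

/-- full integral bound.  For `|f_i - f_j| ≥ 2/T`,
`∫_ℝ min(T, 1/|f_i - θ|) · min(T, 1/|f_j - θ|) dθ ≤ C·log(T|f_i - f_j|)/|f_i - f_j|`. -/
theorem integral_bound_full :
    ∃ C : ℝ, 0 < C ∧
      ∀ (T fi fj : ℝ), 0 < T → fi ≠ fj → 2 / T ≤ |fi - fj| →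
        (∫ θ : ℝ, min T (1 / |fi - θ|) * min T (1 / |fj - θ|))
          ≤ C * Real.log (T * |fi - fj|) / |fi - fj| := by
  refine ⟨32, by norm_num, fun T fi fj hT hne hgap ↦ ?_⟩
  set Δ := |fi - fj|
  have hΔ : 0 < Δ := abs_pos.2 (sub_ne_zero.2 hne)
  have hTΔ : 2 ≤ T * Δ := by rwa [div_le_iff₀ hT, mul_comm] at hgap
  set S := 2 / Δ
  have hS : 0 < S := by positivity
  have hST : S ≤ T := by rwa [div_le_iff₀ hΔ, ← div_le_iff₀' hT]
  set F := fun x ↦ truncInv T x * truncInv S x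
  have hF : Integrable F := integrable_truncInv_mul_truncInv hS.le hT.le
  have hpointwise (θ : ℝ) : truncInv T (fi - θ) * truncInv T (fj - θ) ≤ F (fi - θ) + F (fj - θ) :=
    truncInv_mul_truncInv_le hS hT.le <| by
      rw [inv_div, mul_div_cancel₀ _ two_ne_zero, ← abs_sub_comm θ fj]
      exact abs_sub_le fi θ fj
  have hlog : log (T * Δ / 2) ≤ log (T * Δ) := log_le_log (by linarith) (by linarith)
  have hlog2 : 2 / 3 < log (T * Δ) := by
    linarith [log_two_gt_d9, log_le_log two_pos hTΔ]
  calc ∫ θ, truncInv T (fi - θ) * truncInv T (fj - θ)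
      ≤ ∫ θ, (F (fi - θ) + F (fj - θ)) :=
        integral_mono_of_nonneg (ae_of_all _ fun θ ↦
            mul_nonneg (truncInv_nonneg hT.le _) (truncInv_nonneg hT.le _))
          ((hF.comp_sub_left fi).add (hF.comp_sub_left fj)) (ae_of_all _ hpointwise)
    _ = 2 * ∫ x, F x := by
        rw [integral_add (hF.comp_sub_left fi) (hF.comp_sub_left fj),
          integral_sub_left_eq_self, integral_sub_left_eq_self]
        ring
    _ ≤ 2 * (2 * S * (2 + log (T / S))) := by
        gcongr; exact integral_truncInv_mul_truncInv_le hS hST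
    _ = (16 + 8 * log (T * Δ / 2)) / Δ := by
        simp only [S, div_div_eq_mul_div]; field_simp; ring
    _ ≤ 32 * log (T * Δ) / Δ := by
        gcongr; linarith
end

section
/- Coordinate-wise median bound: if x^{(1)}, …, x^{(n)} ∈ ℝ^3 and x' ∈ ℝ^3 is the coordinate-wise median, then ‖x'‖₂² ≤ 3 · median_i ‖x^{(i)}‖₂². -/
open Finset

/-- The (upper) median of `n+1` reals: the `(⌊(n+1)/2⌋+1)`-th smallest element,
obtained by sorting the tuple. -/
noncomputable def realMedian {n : ℕ} (a : Fin (n + 1) → ℝ) : ℝ :=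
  (a ∘ Tuple.sort a) ⟨(n + 1) / 2, by omega⟩

/-!
The order statistic `a (Tuple.sort a k)` has at least `k + 1` entries at or below it, so a value
with `n - k` entries at or above it cannot exceed it (the two sets would overlap). This makes the
median monotone, and gives `(median a)² ≤ median (a²)`: the entries on the side of `median a` away
from `0` have squares at least `(median a)²`, and either side of the median is large enough.
Apply both to `x i j ^ 2 ≤ ‖x i‖²` and sum over the three coordinates.
-/

section OrderStatistic

variable {α : Type*} [LinearOrder α] {n : ℕ} (a : Fin n → α) (k : Fin n)

theorem card_le_sort_apply : (k : ℕ) + 1 ≤ #{i | a i ≤ a (Tuple.sort a k)} := by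
  rw [← Fin.card_Iic]
  refine card_le_card_of_injOn (Tuple.sort a) (fun p hp => ?_) (Tuple.sort a).injective.injOn
  simpa using Tuple.monotone_sort a (mem_Iic.mp hp)

theorem card_sort_apply_le : n - k ≤ #{i | a (Tuple.sort a k) ≤ a i} := by
  rw [← Fin.card_Ici]
  refine card_le_card_of_injOn (Tuple.sort a) (fun p hp => ?_) (Tuple.sort a).injective.injOn
  simpa using Tuple.monotone_sort a (mem_Ici.mp hp)

variable {a k}

theorem le_sort_apply_of_card_le {c : α} (hc : n - k ≤ #{i | c ≤ a i}) :
    c ≤ a (Tuple.sort a k) := by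
  by_contra! hlt
  have hdisj : Disjoint (α := Finset (Fin n)) {i | a i ≤ a (Tuple.sort a k)} {i | c ≤ a i} :=
    disjoint_filter.mpr fun i _ hle hci => (hle.trans_lt hlt).not_ge hci
  have hcard := card_union_of_disjoint hdisj ▸ card_le_univ _
  have := card_le_sort_apply a k
  rw [Fintype.card_fin] at hcard
  omega

theorem sort_apply_mono {b : Fin n → α} (hab : ∀ i, a i ≤ b i) :
    a (Tuple.sort a k) ≤ b (Tuple.sort b k) :=
  le_sort_apply_of_card_le <| (card_sort_apply_le a k).trans <|
    card_le_card <| monotone_filter_right _ fun i _ hi => hi.trans (hab i)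

end OrderStatistic

theorem realMedian_mono {n : ℕ} {a b : Fin (n + 1) → ℝ} (hab : ∀ i, a i ≤ b i) :
    realMedian a ≤ realMedian b :=
  sort_apply_mono hab

theorem sq_realMedian_le {n : ℕ} (a : Fin (n + 1) → ℝ) :
    realMedian a ^ 2 ≤ realMedian (fun i => a i ^ 2) := by
  set k : Fin (n + 1) := ⟨(n + 1) / 2, by omega⟩
  refine le_sort_apply_of_card_le (a := fun i => a i ^ 2) (k := k) ?_
  rcases le_or_gt 0 (realMedian a) with hm | hm
  · refine (card_sort_apply_le a k).trans <| card_le_card <| monotone_filter_right _ ?_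
    intro i _ hi
    exact pow_le_pow_left₀ hm hi 2
  · refine le_trans ?_ <| (card_le_sort_apply a k).trans <|
      card_le_card <| monotone_filter_right _ ?_
    · simp only [k]
      omega
    · intro i _ hi
      change a i ≤ realMedian a at hi
      nlinarith

/-- if `x' ∈ ℝ³` is the coordinate-wise median of
`x⁽¹⁾, …, x⁽ⁿ⁺¹⁾ ∈ ℝ³`, then `‖x'‖₂² ≤ 3 · median_i ‖x⁽ⁱ⁾‖₂²`. -/
theorem median_norm_sq_le {n : ℕ} (x : Fin (n + 1) → Fin 3 → ℝ) :
    ∑ j : Fin 3, (realMedian (fun i => x i j)) ^ 2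
      ≤ 3 * realMedian (fun i => ∑ j : Fin 3, (x i j) ^ 2) := by
  have hcoord (j : Fin 3) :
      realMedian (fun i => x i j) ^ 2 ≤ realMedian (fun i => ∑ j : Fin 3, x i j ^ 2) :=
    (sq_realMedian_le _).trans <| realMedian_mono fun i =>
      single_le_sum (f := fun j => x i j ^ 2) (fun j _ => sq_nonneg _) (mem_univ j)
  calc ∑ j : Fin 3, realMedian (fun i => x i j) ^ 2
      ≤ ∑ _j : Fin 3, realMedian (fun i => ∑ j : Fin 3, x i j ^ 2) :=
        sum_le_sum fun j _ => hcoord j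
    _ = 3 * realMedian (fun i => ∑ j : Fin 3, x i j ^ 2) := by simp
end
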